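/- In Svrtan's setting, the invariant I(f) of the form f(A) = det(p^{c_0}_1, ..., p^{c_0}_n) — where A = ((ⁱʲp_1, ⁱʲp_2))_{i<j} and c_0 is the assignment giving ⁱʲp_1 to every edge (i,j) with i<j — equals n!. That is, ∑_{τ ∈ (S_2)^{C(n,2)}} sgn(τ) f(τ⁻¹·I) = n!, where Σ = (S_2)^{C(n,2)} acts by swapping the two vectors of each pair and I is the tuple of 2×2 identity matrices (i.e., ⁱʲp_1 = (1,0)ᵀ ↔ polynomial 1, ⁱʲp_2 = (0,1)ᵀ ↔ polynomial t). -/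

import Mathlib

open Equiv Finset Polynomial

/-- The edges of the complete graph on `n` vertices. -/
abbrev SpinorEdge (n : ℕ) := {e : Fin n × Fin n // e.1 < e.2}

/-- The spinor on the oriented edge `(i, j)` after acting by `τ ∈ (S_2)^(n choose 2)` on the
tuple of `2 × 2` identity matrices: the oriented edge `(i, j)` with `i < j` receives the
`τ(e)(0)`-th standard vector (the polynomial `t^{τ(e)(0)}`), and `(j, i)` receives
`t^{τ(e)(1)}`. -/
noncomputable def idSpinorOnEdge (n : ℕ) (τ : SpinorEdge n → Equiv.Perm (Fin 2))
    (i j : Fin n) : Polynomial ℂ :=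
  if h : i < j then X ^ ((τ ⟨(i, j), h⟩ 0 : Fin 2) : ℕ)
  else if h' : j < i then X ^ ((τ ⟨(j, i), h'⟩ 1 : Fin 2) : ℕ)
  else 0

namespace SvrtanAux

variable {n : ℕ}

/-- The exponent assigned by `τ` to the ordered pair `(i, j)`. -/
def aexp (τ : SpinorEdge n → Equiv.Perm (Fin 2)) (i j : Fin n) : ℕ :=
  if h : i < j then ((τ ⟨(i, j), h⟩ 0 : Fin 2) : ℕ)
  else if h' : j < i then ((τ ⟨(j, i), h'⟩ 1 : Fin 2) : ℕ)
  else 0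

/-- The out-degree of `i` in the tournament determined by `τ`. -/
def deg (τ : SpinorEdge n → Equiv.Perm (Fin 2)) (i : Fin n) : ℕ :=
  ∑ j ∈ Finset.univ.erase i, aexp τ i j

lemma spinor_eq (τ : SpinorEdge n → Equiv.Perm (Fin 2)) {i j : Fin n} (h : i ≠ j) :
    idSpinorOnEdge n τ i j = X ^ aexp τ i j := by
  unfold idSpinorOnEdge aexp
  rcases h.lt_or_gt with h1 | h1
  · rw [dif_pos h1, dif_pos h1]
  · rw [dif_neg (by omega : ¬ i < j), dif_neg (by omega : ¬ i < j), dif_pos h1, dif_pos h1]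

lemma prod_spinor (τ : SpinorEdge n → Equiv.Perm (Fin 2)) (i : Fin n) :
    ∏ j ∈ Finset.univ.erase i, idSpinorOnEdge n τ i j = X ^ deg τ i := by
  rw [deg, ← Finset.prod_pow_eq_pow_sum]
  exact Finset.prod_congr rfl fun j hj =>
    spinor_eq τ (fun h => (Finset.mem_erase.mp hj).1 h.symm)

/-- Reindexing a product over edges as a double product. -/
lemma prod_edges {M : Type*} [CommMonoid M] (f : Fin n → Fin n → M) :
    ∏ e : SpinorEdge n, f e.1.1 e.1.2 = ∏ i, ∏ j ∈ Finset.Ioi i, f i j := by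
  classical
  rw [← Finset.prod_subtype (Finset.univ.filter fun p : Fin n × Fin n => p.1 < p.2)
    (by intro x; simp) (fun p => f p.1 p.2)]
  rw [Finset.prod_filter, ← Finset.univ_product_univ,
    Finset.prod_product' (f := fun i j => if i < j then f i j else 1)]
  refine Finset.prod_congr rfl fun i _ => ?_
  rw [← Finset.prod_filter]
  congr 1
  ext j
  simp

lemma prod_edges_pair {M : Type*} [CommMonoid M] (f : Fin n → Fin n → M) :
    ∏ e : SpinorEdge n, (f e.1.1 e.1.2 * f e.1.2 e.1.1)
      = ∏ i, ∏ j ∈ Finset.univ.erase i, f i j := by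
  classical
  rw [Finset.prod_mul_distrib, prod_edges f, prod_edges (fun i j => f j i)]
  have herase : ∀ i : Fin n, Finset.univ.erase i = Finset.Ioi i ∪ Finset.Iio i := by
    intro i; ext j
    simp only [Finset.mem_erase, Finset.mem_univ, and_true, Finset.mem_union,
      Finset.mem_Ioi, Finset.mem_Iio]
    exact ⟨fun h => h.lt_or_gt.symm, fun h => h.elim (fun h => h.ne') (fun h => h.ne)⟩
  have hswap : (∏ i, ∏ j ∈ Finset.Ioi i, f j i) = ∏ i, ∏ j ∈ Finset.Iio i, f i j :=
    Finset.prod_comm' (s' := fun y => Finset.Iio y) (t' := Finset.univ)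
      (by intro x y; simp)
  rw [hswap, ← Finset.prod_mul_distrib]
  refine Finset.prod_congr rfl fun i _ => ?_
  rw [herase i, Finset.prod_union (Finset.disjoint_Ioi_Iio i)]

open MvPolynomial in
/-- The Vandermonde product over the edges. -/
noncomputable def V (n : ℕ) : MvPolynomial (Fin n) ℂ :=
  ∏ e : SpinorEdge n, (X e.1.2 - X e.1.1)

lemma edge_factor (i j : Fin n) :
    (MvPolynomial.X j - MvPolynomial.X i : MvPolynomial (Fin n) ℂ)
      = ∑ π : Equiv.Perm (Fin 2),
          MvPolynomial.C ((Equiv.Perm.sign π : ℤ) : ℂ) * MvPolynomial.X i ^ ((π 0 : Fin 2) : ℕ)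
            * MvPolynomial.X j ^ ((π 1 : Fin 2) : ℕ) := by
  rw [show (Finset.univ : Finset (Equiv.Perm (Fin 2))) = {1, Equiv.swap 0 1} by decide,
    Finset.sum_insert (by decide), Finset.sum_singleton]
  have h0 : ((1 : Equiv.Perm (Fin 2)) 0 : ℕ) = 0 := rfl
  have h1 : ((1 : Equiv.Perm (Fin 2)) 1 : ℕ) = 1 := rfl
  have h2 : ((Equiv.swap (0 : Fin 2) 1) 0 : ℕ) = 1 := by simp [Equiv.swap_apply_left]
  have h3 : ((Equiv.swap (0 : Fin 2) 1) 1 : ℕ) = 0 := by simp [Equiv.swap_apply_right]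
  rw [h0, h1, h2, h3, Equiv.Perm.sign_one, Equiv.Perm.sign_swap (by decide : (0 : Fin 2) ≠ 1)]
  push_cast
  rw [map_one, map_neg, map_one]
  ring

lemma V_eq_sum :
    V n = ∑ τ : SpinorEdge n → Equiv.Perm (Fin 2),
      MvPolynomial.C (∏ e : SpinorEdge n, ((Equiv.Perm.sign (τ e) : ℤ) : ℂ))
        * ∏ i, MvPolynomial.X i ^ deg τ i := by
  rw [V]
  simp only [edge_factor]
  rw [Finset.prod_univ_sum, Fintype.piFinset_univ]
  refine Finset.sum_congr rfl fun τ _ => ?_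
  rw [Finset.prod_mul_distrib, Finset.prod_mul_distrib, map_prod, mul_assoc,
    ← Finset.prod_mul_distrib]
  congr 1
  have key : (∏ e : SpinorEdge n,
      (MvPolynomial.X e.1.1 ^ ((τ e 0 : Fin 2) : ℕ) * MvPolynomial.X e.1.2 ^ ((τ e 1 : Fin 2) : ℕ)
        : MvPolynomial (Fin n) ℂ))
      = ∏ e : SpinorEdge n, (MvPolynomial.X e.1.1 ^ aexp τ e.1.1 e.1.2
          * MvPolynomial.X e.1.2 ^ aexp τ e.1.2 e.1.1) := by
    refine Finset.prod_congr rfl fun e _ => ?_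
    obtain ⟨⟨i, j⟩, h⟩ := e
    rw [aexp, aexp, dif_pos h, dif_neg h.asymm, dif_pos h]
  rw [key, prod_edges_pair (fun i j => (MvPolynomial.X i : MvPolynomial (Fin n) ℂ) ^ aexp τ i j)]
  refine Finset.prod_congr rfl fun i _ => ?_
  rw [deg, ← Finset.prod_pow_eq_pow_sum]

/-- The exponent multiset of a function. -/
noncomputable def m (g : Fin n → ℕ) : Fin n →₀ ℕ := Finsupp.equivFunOnFinite.symm g

lemma m_inj : Function.Injective (m (n := n)) :=
  Finsupp.equivFunOnFinite.symm.injective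

lemma prod_X_pow (g : Fin n → ℕ) :
    (∏ i, (MvPolynomial.X i : MvPolynomial (Fin n) ℂ) ^ g i)
      = MvPolynomial.monomial (m g) 1 := by
  rw [← MvPolynomial.prod_X_pow_eq_monomial]
  exact (Finset.prod_subset (Finset.subset_univ _) fun i _ hi => by
    rw [show g i = 0 from not_ne_iff.mp fun h => hi (Finsupp.mem_support_iff.mpr h),
      pow_zero]).symm

lemma coeff_V_monomial (σ : Equiv.Perm (Fin n)) :
    MvPolynomial.coeff (m fun i => ((σ i : Fin n) : ℕ)) (V n)
      = ((Equiv.Perm.sign σ : ℤ) : ℂ) := by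
  have hV : V n = (Matrix.vandermonde fun i => (MvPolynomial.X i : MvPolynomial (Fin n) ℂ)).det := by
    rw [Matrix.det_vandermonde, V,
      prod_edges (fun i j => (MvPolynomial.X j - MvPolynomial.X i : MvPolynomial (Fin n) ℂ))]
  rw [hV, Matrix.det_apply', MvPolynomial.coeff_sum]
  have hterm : ∀ π : Equiv.Perm (Fin n),
      (∏ i, Matrix.vandermonde (fun i => (MvPolynomial.X i : MvPolynomial (Fin n) ℂ)) (π i) i)
        = MvPolynomial.monomial (m fun k => ((π⁻¹ k : Fin n) : ℕ)) 1 := by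
    intro π
    rw [← prod_X_pow (fun k => ((π⁻¹ k : Fin n) : ℕ)),
      ← Equiv.prod_comp π
        (fun k => (MvPolynomial.X k : MvPolynomial (Fin n) ℂ) ^ ((π⁻¹ k : Fin n) : ℕ))]
    exact Finset.prod_congr rfl fun i _ => by
      rw [Matrix.vandermonde_apply, Equiv.Perm.inv_def, Equiv.symm_apply_apply]
  have hcast : ∀ π : Equiv.Perm (Fin n),
      ((Equiv.Perm.sign π : ℤ) : MvPolynomial (Fin n) ℂ)
        = MvPolynomial.C ((Equiv.Perm.sign π : ℤ) : ℂ) := by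
    intro π; simp
  have hone : ∀ π : Equiv.Perm (Fin n),
      MvPolynomial.coeff (m fun i => ((σ i : Fin n) : ℕ))
        (((Equiv.Perm.sign π : ℤ) : MvPolynomial (Fin n) ℂ)
          * ∏ i, Matrix.vandermonde (fun i => (MvPolynomial.X i : MvPolynomial (Fin n) ℂ)) (π i) i)
        = if π = σ⁻¹ then ((Equiv.Perm.sign σ : ℤ) : ℂ) else 0 := by
    intro π
    rw [hterm π, hcast π, MvPolynomial.coeff_C_mul, MvPolynomial.coeff_monomial]
    by_cases hπ : π = σ⁻¹
    · subst hπ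
      rw [if_pos, if_pos rfl]
      · simp
      · simp
    · rw [if_neg hπ, if_neg, mul_zero]
      intro h
      apply hπ
      have h2 : (fun k => ((π⁻¹ k : Fin n) : ℕ)) = fun i => ((σ i : Fin n) : ℕ) := m_inj h
      have h3 : π⁻¹ = σ := Equiv.ext fun k => Fin.val_injective (congrFun h2 k)
      rw [← h3, inv_inv]
  rw [Finset.sum_congr rfl fun π _ => hone π, Finset.sum_ite_eq' Finset.univ σ⁻¹,
    if_pos (Finset.mem_univ _)]

end SvrtanAux

/-- Svrtan's invariant: the skew-symmetrized colorful form, evaluated at the tuple of `2 × 2`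
identity matrices (i.e. with spinor bases `(1, t)` on each edge), equals `n!`. -/
theorem svrtan_invariant_eq_factorial (n : ℕ) (hn : 0 < n) :
    (∑ τ : SpinorEdge n → Equiv.Perm (Fin 2),
      (∏ e : SpinorEdge n, ((Equiv.Perm.sign (τ e) : ℤ) : ℂ)) *
        (Matrix.of fun r i : Fin n =>
          (∏ j ∈ Finset.univ.erase i, idSpinorOnEdge n τ i j).coeff r).det)
      = (n.factorial : ℂ) := by
  classical
  have hdet : ∀ τ : SpinorEdge n → Equiv.Perm (Fin 2),
      (Matrix.of fun r i : Fin n =>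
          (∏ j ∈ Finset.univ.erase i, idSpinorOnEdge n τ i j).coeff r).det
        = ∑ σ : Equiv.Perm (Fin n), ((Equiv.Perm.sign σ : ℤ) : ℂ) *
            (if (fun i => SvrtanAux.deg τ i) = (fun i => ((σ i : Fin n) : ℕ))
              then (1 : ℂ) else 0) := by
    intro τ
    rw [Matrix.det_apply']
    refine Finset.sum_congr rfl fun σ _ => ?_
    congr 1
    have hentry : ∀ i, (Matrix.of fun r i : Fin n =>
        (∏ j ∈ Finset.univ.erase i, idSpinorOnEdge n τ i j).coeff r) (σ i) i
        = if ((σ i : Fin n) : ℕ) = SvrtanAux.deg τ i then (1 : ℂ) else 0 := by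
      intro i
      rw [Matrix.of_apply, SvrtanAux.prod_spinor, Polynomial.coeff_X_pow]
    rw [Finset.prod_congr rfl fun i _ => hentry i]
    simp only [Finset.prod_boole]
    by_cases h : (fun i => SvrtanAux.deg τ i) = (fun i => ((σ i : Fin n) : ℕ))
    · rw [if_pos h, if_pos fun i _ => (congrFun h i).symm]
    · rw [if_neg h, if_neg fun hc => h (funext fun i => (hc i (Finset.mem_univ i)).symm)]
  have hinner : ∀ σ : Equiv.Perm (Fin n),
      (∑ τ : SpinorEdge n → Equiv.Perm (Fin 2),
        (∏ e : SpinorEdge n, ((Equiv.Perm.sign (τ e) : ℤ) : ℂ)) *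
          (if (fun i => SvrtanAux.deg τ i) = (fun i => ((σ i : Fin n) : ℕ))
            then (1 : ℂ) else 0))
        = MvPolynomial.coeff (SvrtanAux.m fun i => ((σ i : Fin n) : ℕ))
            (SvrtanAux.V n) := by
    intro σ
    rw [SvrtanAux.V_eq_sum, MvPolynomial.coeff_sum]
    refine Finset.sum_congr rfl fun τ _ => ?_
    rw [SvrtanAux.prod_X_pow (fun i => SvrtanAux.deg τ i), MvPolynomial.coeff_C_mul,
      MvPolynomial.coeff_monomial]
    congr 1
    exact if_congr SvrtanAux.m_inj.eq_iff.symm rfl rfl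
  calc (∑ τ : SpinorEdge n → Equiv.Perm (Fin 2),
      (∏ e : SpinorEdge n, ((Equiv.Perm.sign (τ e) : ℤ) : ℂ)) *
        (Matrix.of fun r i : Fin n =>
          (∏ j ∈ Finset.univ.erase i, idSpinorOnEdge n τ i j).coeff r).det)
      = ∑ τ : SpinorEdge n → Equiv.Perm (Fin 2), ∑ σ : Equiv.Perm (Fin n),
          ((Equiv.Perm.sign σ : ℤ) : ℂ) *
            ((∏ e : SpinorEdge n, ((Equiv.Perm.sign (τ e) : ℤ) : ℂ)) *
              (if (fun i => SvrtanAux.deg τ i) = (fun i => ((σ i : Fin n) : ℕ))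
                then (1 : ℂ) else 0)) := by
        refine Finset.sum_congr rfl fun τ _ => ?_
        rw [hdet τ, Finset.mul_sum]
        exact Finset.sum_congr rfl fun σ _ => by ring
    _ = ∑ σ : Equiv.Perm (Fin n), ((Equiv.Perm.sign σ : ℤ) : ℂ) *
          ∑ τ : SpinorEdge n → Equiv.Perm (Fin 2),
            ((∏ e : SpinorEdge n, ((Equiv.Perm.sign (τ e) : ℤ) : ℂ)) *
              (if (fun i => SvrtanAux.deg τ i) = (fun i => ((σ i : Fin n) : ℕ))
                then (1 : ℂ) else 0)) := by
        rw [Finset.sum_comm]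
        exact Finset.sum_congr rfl fun σ _ => (Finset.mul_sum _ _ _).symm
    _ = ∑ σ : Equiv.Perm (Fin n),
          ((Equiv.Perm.sign σ : ℤ) : ℂ) * ((Equiv.Perm.sign σ : ℤ) : ℂ) := by
        exact Finset.sum_congr rfl fun σ _ => by
          rw [hinner σ, SvrtanAux.coeff_V_monomial σ]
    _ = ∑ _σ : Equiv.Perm (Fin n), (1 : ℂ) := by
        refine Finset.sum_congr rfl fun σ _ => ?_
        rcases Int.units_eq_one_or (Equiv.Perm.sign σ) with h | h <;> rw [h] <;> norm_num
    _ = (n.factorial : ℂ) := by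
        rw [Finset.sum_const, Finset.card_univ, Fintype.card_perm, Fintype.card_fin,
          nsmul_eq_mul, mul_one]
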